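/- Let {a(i): i∈ℕ} be a stationary process on a finite state space with E[a(1)]=0 satisfying the mixing estimate (3.2), and assume additionally that all odd mixed moments vanish: E[a(i_1)·…·a(i_r)]=0 for every odd r and all i_1,…,i_r∈ℕ. Then for every k∈ℕ there is a constant C' such that for all i_1≤…≤i_{2k} in ℕ: |E[a(i_1)·…·a(i_{2k})]| ≤ C'·α^{max{i_{2l}−i_{2l−1} : l=1,…,k}} ≤ C'·∏_{l=1}^{k} p^{i_{2l}−i_{2l−1}}, where p := α^{1/k}. -/

import Mathlib

/-!
Let `M` be the widest gap `i_{2l} - i_{2l-1}` and split the time tuple right before `i_{2l}`.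
The past block then has `2l - 1` factors, an odd number, so its moment vanishes and
`E[a(i_1)⋯a(i_{2k})]` equals the covariance of the past and future products. Since the process
takes finitely many values, this covariance is a finite sum over value patterns `u` (past) and
`v` (future) of `P(u ∩ v) - P(u) P(v)`, and the mixing estimate bounds each such term by
`C α^M`. The product form holds because the `k` gaps sum to at most `k M` and `α ≤ 1`.
-/

open MeasureTheory ProbabilityTheory Finset

/-- The event that the process `a` takes the values `s t` at the times `i t` for all `t` in a
given set of positions. -/
def valueEvent {Ω : Type} [MeasureSpace Ω] {k : ℕ} (a : ℕ → Ω → ℝ) (i : Fin k → ℕ)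
    (s : Fin k → ℝ) (pos : Finset (Fin k)) : Set Ω :=
  {ω | ∀ t ∈ pos, a (i t) ω = s t}

/-- The mixing estimate (3.2): for all `k`, every split point `l` with `0 < l`, all monotone
time tuples `i_1 ≤ … ≤ i_k` and all states, the conditional probability of the future values
given the past values differs from the unconditional probability by at most
`C·α^{i_l - i_{l-1}}`, whenever the conditioning event has positive probability. -/
def MixingEstimate {Ω : Type} [MeasureSpace Ω] (a : ℕ → Ω → ℝ) (C α : ℝ) : Prop :=
  ∀ (k : ℕ) (i : Fin k → ℕ), Monotone i → ∀ (s : Fin k → ℝ) (l : Fin k), 0 < l.val →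
    volume (valueEvent a i s (univ.filter (fun t => t < l))) ≠ 0 →
    |(volume (valueEvent a i s (univ.filter (fun t => l ≤ t)) ∩
          valueEvent a i s (univ.filter (fun t => t < l)))).toReal /
        (volume (valueEvent a i s (univ.filter (fun t => t < l)))).toReal -
      (volume (valueEvent a i s (univ.filter (fun t => l ≤ t)))).toReal|
      ≤ C * α ^ (i l - i ⟨l.val - 1, by omega⟩)

section FiniteFamilies

variable {Ω α β : Type*} [MeasurableSpace Ω] {μ : Measure Ω}

lemma integral_sum_indicator_const [IsFiniteMeasure μ] (U : Finset α) {E : α → Set Ω}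
    (hE : ∀ u, MeasurableSet (E u)) (f : α → ℝ) :
    ∫ ω, ∑ u ∈ U, (E u).indicator (fun _ => f u) ω ∂μ = ∑ u ∈ U, f u * μ.real (E u) := by
  rw [integral_finsetSum _ fun u _ => (integrable_const (f u)).indicator (hE u)]
  refine sum_congr rfl fun u _ => ?_
  rw [integral_indicator_const (f u) (hE u), smul_eq_mul, mul_comm]

lemma integral_sum_indicator_mul_sum_indicator [IsFiniteMeasure μ] (U : Finset α)
    (V : Finset β) {E : α → Set Ω} {F : β → Set Ω} (hE : ∀ u, MeasurableSet (E u))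
    (hF : ∀ v, MeasurableSet (F v)) (f : α → ℝ) (g : β → ℝ) :
    ∫ ω, (∑ u ∈ U, (E u).indicator (fun _ => f u) ω) *
        ∑ v ∈ V, (F v).indicator (fun _ => g v) ω ∂μ
      = ∑ u ∈ U, ∑ v ∈ V, f u * g v * μ.real (E u ∩ F v) := by
  simp_rw [sum_mul_sum, ← Set.inter_indicator_mul, ← sum_product']
  rw [integral_sum_indicator_const (U ×ˢ V) fun p => (hE p.1).inter (hF p.2), sum_product]

lemma abs_integral_mul_sub_mul_integral_le [IsFiniteMeasure μ] (U : Finset α)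
    (V : Finset β) {E : α → Set Ω} {F : β → Set Ω} (hE : ∀ u, MeasurableSet (E u))
    (hF : ∀ v, MeasurableSet (F v)) {f : α → ℝ} {g : β → ℝ} {Bf Bg ε : ℝ}
    (hf : ∀ u ∈ U, |f u| ≤ Bf) (hg : ∀ v ∈ V, |g v| ≤ Bg)
    (hEF : ∀ u ∈ U, ∀ v ∈ V, |μ.real (E u ∩ F v) - μ.real (E u) * μ.real (F v)| ≤ ε) :
    |(∫ ω, (∑ u ∈ U, (E u).indicator (fun _ => f u) ω) *
          ∑ v ∈ V, (F v).indicator (fun _ => g v) ω ∂μ) -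
        (∫ ω, ∑ u ∈ U, (E u).indicator (fun _ => f u) ω ∂μ) *
          ∫ ω, ∑ v ∈ V, (F v).indicator (fun _ => g v) ω ∂μ|
      ≤ #U * #V * (Bf * Bg * ε) := by
  have hcov : (∑ u ∈ U, ∑ v ∈ V, f u * g v * μ.real (E u ∩ F v)) -
        (∑ u ∈ U, f u * μ.real (E u)) * ∑ v ∈ V, g v * μ.real (F v)
      = ∑ u ∈ U, ∑ v ∈ V, f u * g v * (μ.real (E u ∩ F v) - μ.real (E u) * μ.real (F v)) := by
    simp only [sum_mul_sum, ← sum_sub_distrib]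
    exact sum_congr rfl fun _ _ => sum_congr rfl fun _ _ => by ring
  rw [integral_sum_indicator_mul_sum_indicator U V hE hF, integral_sum_indicator_const U hE,
    integral_sum_indicator_const V hF, hcov]
  calc _ ≤ ∑ u ∈ U, ∑ v ∈ V, |f u * g v * (μ.real (E u ∩ F v) - μ.real (E u) * μ.real (F v))| :=
        (abs_sum_le_sum_abs _ _).trans (sum_le_sum fun u _ => abs_sum_le_sum_abs _ _)
    _ ≤ ∑ _u ∈ U, ∑ _v ∈ V, Bf * Bg * ε := by
        refine sum_le_sum fun u hu => sum_le_sum fun v hv => ?_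
        have hBf : 0 ≤ Bf := (abs_nonneg _).trans (hf u hu)
        have hBg : 0 ≤ Bg := (abs_nonneg _).trans (hg v hv)
        rw [abs_mul, abs_mul]
        exact mul_le_mul (mul_le_mul (hf u hu) (hg v hv) (abs_nonneg _) hBf) (hEF u hu v hv)
          (abs_nonneg _) (mul_nonneg hBf hBg)
    _ = #U * #V * (Bf * Bg * ε) := by simp only [sum_const, nsmul_eq_mul]; ring

lemma abs_measureReal_inter_sub_mul_le [IsProbabilityMeasure μ] {A B : Set Ω} {ε : ℝ}
    (hε : 0 ≤ ε) (h : μ A ≠ 0 → |μ.real (B ∩ A) / μ.real A - μ.real B| ≤ ε) :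
    |μ.real (A ∩ B) - μ.real A * μ.real B| ≤ ε := by
  by_cases hA : μ A = 0
  · have hAB : μ (A ∩ B) = 0 := measure_mono_null Set.inter_subset_left hA
    simpa [Measure.real, hA, hAB] using hε
  have hpos : 0 < μ.real A := ENNReal.toReal_pos hA (measure_ne_top μ A)
  have hsplit : μ.real (A ∩ B) - μ.real A * μ.real B
      = (μ.real (B ∩ A) / μ.real A - μ.real B) * μ.real A := by
    rw [Set.inter_comm]; field_simp
  rw [hsplit, abs_mul, abs_of_pos hpos]
  exact (mul_le_mul_of_nonneg_right (h hA) hpos.le).trans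
    (mul_le_of_le_one_right hε measureReal_le_one)

end FiniteFamilies

lemma pow_sup_le_prod_rpow {α : ℝ} (hα0 : 0 ≤ α) (hα1 : α ≤ 1) {k : ℕ} (d : Fin k → ℕ) :
    α ^ (univ.sup d) ≤ ∏ l, (α ^ ((1 : ℝ) / k)) ^ (d l) := by
  have hprod : ∏ l, (α ^ ((1 : ℝ) / k)) ^ d l = α ^ ((∑ l, d l : ℕ) / (k : ℝ)) := by
    rw [prod_pow_eq_pow_sum, ← Real.rpow_natCast, ← Real.rpow_mul hα0]
    ring_nf
  have hsum : ∑ l, d l ≤ univ.sup d * k := by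
    simpa [mul_comm] using sum_le_card_nsmul univ d _ fun l _ => le_sup (mem_univ l)
  rw [hprod, ← Real.rpow_natCast]
  refine Real.rpow_le_rpow_of_exponent_ge' hα0 hα1 (by positivity) ?_
  exact div_le_of_le_mul₀ (by positivity) (by positivity) (by exact_mod_cast hsum)

section ValueEvents

variable {Ω : Type} [MeasureSpace Ω] {n : ℕ}

noncomputable def valuesOn (S : Finset ℝ) (pos : Finset (Fin n)) : Finset (Fin n → ℝ) :=
  (Fintype.piFinset fun _ => S).image fun s => pos.piecewise s 0

lemma card_valuesOn_le (S : Finset ℝ) (pos : Finset (Fin n)) : #(valuesOn S pos) ≤ #S ^ n :=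
  card_image_le.trans_eq (Fintype.card_piFinset_const S n)

lemma abs_prod_le_of_mem_valuesOn {S : Finset ℝ} {pos : Finset (Fin n)} {u : Fin n → ℝ}
    (hu : u ∈ valuesOn S pos) : |∏ t ∈ pos, u t| ≤ (∑ x ∈ S, |x|) ^ #pos := by
  obtain ⟨s, hs, rfl⟩ := mem_image.mp hu
  rw [abs_prod, ← prod_const]
  refine prod_le_prod (fun _ _ => abs_nonneg _) fun t ht => ?_
  rw [piecewise_eq_of_mem _ _ _ ht]
  exact single_le_sum (f := fun x => |x|) (fun _ _ => abs_nonneg _) (Fintype.mem_piFinset.mp hs t)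

lemma valueEvent_congr (a : ℕ → Ω → ℝ) (i : Fin n → ℕ) {s s' : Fin n → ℝ}
    {pos : Finset (Fin n)} (h : ∀ t ∈ pos, s t = s' t) :
    valueEvent a i s pos = valueEvent a i s' pos := by
  ext ω
  exact forall₂_congr fun t ht => by rw [h t ht]

lemma measurableSet_valueEvent {a : ℕ → Ω → ℝ} (hmeas : ∀ j, Measurable (a j))
    (i : Fin n → ℕ) (s : Fin n → ℝ) (pos : Finset (Fin n)) :
    MeasurableSet (valueEvent a i s pos) := by
  have h : valueEvent a i s pos = ⋂ t ∈ pos, a (i t) ⁻¹' {s t} := by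
    ext ω; simp [valueEvent]
  rw [h]
  exact Finset.measurableSet_biInter pos fun t _ => hmeas _ (measurableSet_singleton _)

lemma prod_eq_sum_indicator_valueEvent {S : Finset ℝ} {a : ℕ → Ω → ℝ}
    (hvals : ∀ j ω, a j ω ∈ S) (i : Fin n → ℕ) (pos : Finset (Fin n)) (ω : Ω) :
    ∏ t ∈ pos, a (i t) ω
      = ∑ u ∈ valuesOn S pos, (valueEvent a i u pos).indicator (fun _ => ∏ t ∈ pos, u t) ω := by
  set u₀ := pos.piecewise (fun t => a (i t) ω) 0
  have hu₀ : ω ∈ valueEvent a i u₀ pos := fun t ht =>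
    (pos.piecewise_eq_of_mem (fun t => a (i t) ω) 0 ht).symm
  have hmem : u₀ ∈ valuesOn S pos :=
    mem_image_of_mem _ (Fintype.mem_piFinset.mpr fun t => hvals _ ω)
  rw [sum_eq_single_of_mem u₀ hmem, Set.indicator_of_mem hu₀]
  · exact prod_congr rfl fun t ht => hu₀ t ht
  · rintro _ hu hne
    obtain ⟨s, -, rfl⟩ := mem_image.mp hu
    refine Set.indicator_of_notMem (fun hω => hne (funext fun t => ?_)) _
    by_cases ht : t ∈ pos
    · exact (hω t ht).symm.trans (hu₀ t ht)
    · simp only [u₀, piecewise_eq_of_notMem _ _ _ ht]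

lemma integral_prod_eq_zero_of_odd_card {a : ℕ → Ω → ℝ}
    (hodd : ∀ r : ℕ, Odd r → ∀ i : Fin r → ℕ, (∫ ω, ∏ u : Fin r, a (i u) ω) = 0)
    {ι : Type*} (pos : Finset ι) (hpos : Odd #pos) (j : ι → ℕ) :
    ∫ ω, ∏ t ∈ pos, a (j t) ω = 0 := by
  have hreindex (ω : Ω) :
      ∏ t ∈ pos, a (j t) ω = ∏ u : Fin #pos, a (j (pos.equivFin.symm u)) ω := by
    rw [← prod_coe_sort, ← pos.equivFin.symm.prod_comp]
  simp_rw [hreindex]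
  exact hodd _ hpos _

lemma abs_integral_prod_sub_le_of_mixing [IsProbabilityMeasure (volume : Measure Ω)]
    {S : Finset ℝ} {a : ℕ → Ω → ℝ} (hmeas : ∀ j, Measurable (a j)) (hvals : ∀ j ω, a j ω ∈ S)
    {C α : ℝ} (hC : 0 ≤ C) (hα : 0 ≤ α) (hmix : MixingEstimate a C α)
    {i : Fin n → ℕ} (hi : Monotone i) (L : Fin n) (hL : 0 < L.val) :
    |(∫ ω, ∏ t, a (i t) ω) -
        (∫ ω, ∏ t ∈ univ.filter (· < L), a (i t) ω) * ∫ ω, ∏ t ∈ univ.filter (L ≤ ·), a (i t) ω|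
      ≤ #S ^ n * #S ^ n * ((∑ x ∈ S, |x|) ^ n * (C * α ^ (i L - i ⟨L.val - 1, by omega⟩))) := by
  set past := univ.filter (· < L)
  set fut := univ.filter (L ≤ ·)
  have hsplit (ω : Ω) : ∏ t, a (i t) ω = (∏ t ∈ past, a (i t) ω) * ∏ t ∈ fut, a (i t) ω := by
    simp only [past, fut, ← not_lt]
    exact (prod_filter_mul_prod_filter_not _ _ _).symm
  have hcard : #past + #fut = n := by
    simpa [past, fut, not_lt] using card_filter_add_card_filter_not (s := univ) (· < L)
  have hdisj {t : Fin n} (ht : t ∈ fut) : t ∉ past := by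
    simpa [past, fut] using ht
  have hcov : ∀ u ∈ valuesOn S past, ∀ v ∈ valuesOn S fut,
      |volume.real (valueEvent a i u past ∩ valueEvent a i v fut) -
          volume.real (valueEvent a i u past) * volume.real (valueEvent a i v fut)|
        ≤ C * α ^ (i L - i ⟨L.val - 1, by omega⟩) := by
    intro u _ v _
    have hu : valueEvent a i (past.piecewise u v) past = valueEvent a i u past :=
      valueEvent_congr a i fun t ht => piecewise_eq_of_mem _ _ _ ht
    have hv : valueEvent a i (past.piecewise u v) fut = valueEvent a i v fut :=
      valueEvent_congr a i fun t ht => piecewise_eq_of_notMem _ _ _ (hdisj ht)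
    refine abs_measureReal_inter_sub_mul_le (by positivity) fun h0 => ?_
    have := hmix n i hi (past.piecewise u v) L hL (by rwa [hu])
    rwa [hu, hv] at this
  simp only [hsplit, prod_eq_sum_indicator_valueEvent hvals i past,
    prod_eq_sum_indicator_valueEvent hvals i fut]
  calc _ ≤ #(valuesOn S past) * #(valuesOn S fut) * ((∑ x ∈ S, |x|) ^ #past *
          (∑ x ∈ S, |x|) ^ #fut * (C * α ^ (i L - i ⟨L.val - 1, by omega⟩))) :=
        abs_integral_mul_sub_mul_integral_le _ _ (measurableSet_valueEvent hmeas i · past)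
          (measurableSet_valueEvent hmeas i · fut) (fun _ => abs_prod_le_of_mem_valuesOn)
          (fun _ => abs_prod_le_of_mem_valuesOn) hcov
    _ ≤ _ := by
      rw [← pow_add, hcard]
      gcongr <;> exact_mod_cast card_valuesOn_le S _

end ValueEvents

/-- **Condition (A2) for finite-state mixing processes with vanishing odd moments.** Let
`{a(i)}` be a stationary process with values in a finite state space `S ⊆ ℝ`, `E[a(0)] = 0`,
satisfying the mixing estimate (3.2), and assume all odd mixed moments vanish. Then for every
`k ≥ 1` there is a constant `C' ≥ 0` such that for all `i_1 ≤ … ≤ i_{2k}`: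
`|E[a(i_1)⋯a(i_{2k})]| ≤ C'·α^{max{i_{2l} - i_{2l-1} : l=1,…,k}}
  ≤ C'·∏_{l=1}^{k} p^{i_{2l} - i_{2l-1}}`, where `p := α^{1/k}`. -/
theorem even_moment_A2_bound
    {Ω : Type} [MeasureSpace Ω] [IsProbabilityMeasure (volume : Measure Ω)]
    (S : Finset ℝ)
    (a : ℕ → Ω → ℝ) (hmeas : ∀ i, Measurable (a i))
    (hvals : ∀ i ω, a i ω ∈ S)
    (C α : ℝ) (hC : 0 < C) (hα0 : 0 ≤ α) (hα1 : α < 1)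
    (hmix : MixingEstimate a C α)
    (hodd : ∀ r : ℕ, Odd r → ∀ i : Fin r → ℕ, (∫ ω, ∏ u : Fin r, a (i u) ω) = 0)
    (k : ℕ) (hk : 1 ≤ k) :
    ∃ C' : ℝ, 0 ≤ C' ∧
      ∀ i : Fin (2 * k) → ℕ, Monotone i →
        |∫ ω, ∏ r : Fin (2 * k), a (i r) ω|
            ≤ C' * α ^ (Finset.univ.sup (fun l : Fin k =>
                i ⟨2 * l.val + 1, by omega⟩ - i ⟨2 * l.val, by omega⟩)) ∧
        C' * α ^ (Finset.univ.sup (fun l : Fin k =>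
                i ⟨2 * l.val + 1, by omega⟩ - i ⟨2 * l.val, by omega⟩))
            ≤ C' * ∏ l : Fin k,
                (α ^ ((1 : ℝ) / k)) ^ (i ⟨2 * l.val + 1, by omega⟩ - i ⟨2 * l.val, by omega⟩) := by
  refine ⟨#S ^ (2 * k) * #S ^ (2 * k) * ((∑ x ∈ S, |x|) ^ (2 * k) * C), by positivity,
    fun i hi => ⟨?_, by gcongr; exact pow_sup_le_prod_rpow hα0 hα1.le _⟩⟩
  obtain ⟨l, -, hl⟩ := exists_mem_eq_sup univ (univ_nonempty_iff.mpr ⟨⟨0, hk⟩⟩)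
    fun l : Fin k => i ⟨2 * l.val + 1, by omega⟩ - i ⟨2 * l.val, by omega⟩
  set L : Fin (2 * k) := ⟨2 * l.val + 1, by omega⟩
  have hpast : ∫ ω, ∏ t ∈ univ.filter (· < L), a (i t) ω = 0 :=
    integral_prod_eq_zero_of_odd_card hodd _ (by simp [filter_gt_eq_Iio, L]) i
  have hmixed := abs_integral_prod_sub_le_of_mixing hmeas hvals hC.le hα0 hmix hi L (by simp [L])
  rw [hpast, zero_mul, sub_zero] at hmixed
  rw [hl, mul_assoc (_ * _), mul_assoc ((∑ x ∈ S, |x|) ^ (2 * k))]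
  exact hmixed
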